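/- For every complex number x, ∑_{ν ∈ ℤ} J_{3ν}(x) = (1/3)[1 + 2 cos(x√3/2)]. -/

import Mathlib

open scoped Real

/-- Bessel function of the first kind of natural order `n`, via its power series. -/
noncomputable def besselJNat (n : ℕ) (x : ℂ) : ℂ :=
  ∑' m : ℕ, (-1 : ℂ) ^ m / ((m.factorial : ℂ) * ((m + n).factorial : ℂ)) * (x / 2) ^ (2 * m + n)

/-- Bessel function of the first kind of integer order, with `J_{-n} = (-1)^n J_n`. -/
noncomputable def besselJ (n : ℤ) (x : ℂ) : ℂ :=
  if 0 ≤ n then besselJNat n.toNat x else (-1 : ℂ) ^ n.natAbs * besselJNat n.natAbs x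

/-!
Multiplying the exponential series of `exp (x t / 2)` and `exp (-x / (2 t))` and collecting the
powers of `t` gives the generating function `∑ₙ Jₙ(x) tⁿ = exp (x / 2 · (t - t⁻¹))` on `t ≠ 0`.
Averaging it over the cube roots of unity `t = 1, ω, ω²` keeps exactly the indices divisible
by `3`, and since `ω - ω⁻¹ = i√3` and `ω² - ω⁻² = -i√3` the average is
`(1 + exp (i x √3 / 2) + exp (-i x √3 / 2)) / 3 = (1 + 2 cos (x √3 / 2)) / 3`.
-/

open scoped Nat
open Complex Finset

def diagonalEquiv : ℤ × ℕ ≃ ℕ × ℕ where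
  toFun p := (p.2 + p.1.toNat, p.2 + (-p.1).toNat)
  invFun q := ((q.1 : ℤ) - q.2, min q.1 q.2)
  left_inv p := by ext <;> dsimp <;> omega
  right_inv q := by ext <;> dsimp <;> omega

theorem HasSum.tsum_fiberwise_sub {α : Type*} [NormedAddCommGroup α] [CompleteSpace α]
    {f : ℕ × ℕ → α} {a : α} (hf : HasSum f a) :
    HasSum (fun n : ℤ => ∑' m : ℕ, f (m + n.toNat, m + (-n).toNat)) a := by
  have h := diagonalEquiv.hasSum_iff.mpr hf
  exact h.prod_fiberwise fun n => (h.summable.prod_factor n).hasSum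

theorem hasSum_exp_series (z : ℂ) : HasSum (fun n : ℕ => z ^ n / (n ! : ℂ)) (exp z) := by
  rw [exp_eq_exp_ℂ]
  exact NormedSpace.expSeries_div_hasSum_exp z

theorem summable_norm_exp_series (z : ℂ) : Summable (fun n : ℕ => ‖z ^ n / (n ! : ℂ)‖) :=
  NormedSpace.norm_expSeries_div_summable z

theorem besselJ_natCast (n : ℕ) (x : ℂ) : besselJ n x = besselJNat n x := by
  simp [besselJ]

theorem besselJ_neg_natCast (n : ℕ) (x : ℂ) : besselJ (-n) x = (-1) ^ n * besselJNat n x := by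
  rcases n.eq_zero_or_pos with rfl | hn
  · simp [besselJ]
  · rw [besselJ, if_neg (by omega), Int.natAbs_neg, Int.natAbs_natCast]

theorem exp_series_terms_mul (x t : ℂ) (ht : t ≠ 0) (i j : ℕ) :
    (x / 2 * t) ^ i / i ! * (x / 2 * -t⁻¹) ^ j / j ! =
      (-1) ^ j / (i ! * j ! : ℂ) * (x / 2) ^ (i + j) * t ^ ((i : ℤ) - j) := by
  rw [zpow_sub₀ ht, zpow_natCast, zpow_natCast, mul_pow, mul_pow, neg_pow, inv_pow, pow_add]
  field_simp

theorem besselJ_mul_zpow_eq_tsum (x t : ℂ) (ht : t ≠ 0) (n : ℤ) :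
    besselJ n x * t ^ n = ∑' m : ℕ, (x / 2 * t) ^ (m + n.toNat) / (m + n.toNat)! *
      ((x / 2 * -t⁻¹) ^ (m + (-n).toNat) / (m + (-n).toNat)!) := by
  have hsub : ∀ m : ℕ, ((m + n.toNat : ℕ) : ℤ) - ((m + (-n).toNat : ℕ) : ℤ) = n := by omega
  simp_rw [← mul_div_assoc, exp_series_terms_mul x t ht, hsub, tsum_mul_right]
  congr 1
  obtain ⟨N, rfl | rfl⟩ := n.eq_nat_or_neg
  · simp only [besselJ_natCast, besselJNat, Int.toNat_natCast, Int.toNat_neg_natCast]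
    exact tsum_congr fun m => by ring_nf
  · simp only [besselJ_neg_natCast, besselJNat, neg_neg, Int.toNat_natCast, Int.toNat_neg_natCast,
      ← tsum_mul_left]
    exact tsum_congr fun m => by ring_nf

theorem hasSum_besselJ_mul_zpow (x t : ℂ) (ht : t ≠ 0) :
    HasSum (fun n : ℤ => besselJ n x * t ^ n) (exp (x / 2 * (t - t⁻¹))) := by
  have hsummable := summable_mul_of_summable_norm (summable_norm_exp_series (x / 2 * t))
    (summable_norm_exp_series (x / 2 * -t⁻¹))
  have hprod := (hasSum_exp_series _).mul (hasSum_exp_series _) hsummable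
  rw [← exp_add, ← mul_add, ← sub_eq_add_neg] at hprod
  simpa only [besselJ_mul_zpow_eq_tsum x t ht] using hprod.tsum_fiberwise_sub

namespace IsPrimitiveRoot

variable {K : Type*} [Field K] {ζ : K} {k : ℕ}

theorem sum_range_pow_zpow (hζ : IsPrimitiveRoot ζ k) (n : ℤ) :
    ∑ j ∈ range k, (ζ ^ j) ^ n = if (k : ℤ) ∣ n then (k : K) else 0 := by
  simp_rw [← zpow_natCast, ← zpow_mul, mul_comm _ n, zpow_mul, zpow_natCast]
  split_ifs with h
  · simp [(hζ.zpow_eq_one_iff_dvd n).mpr h]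
  · have hne : ζ ^ n ≠ 1 := mt (hζ.zpow_eq_one_iff_dvd n).mp h
    rw [geom_sum_eq hne, ← zpow_natCast, ← zpow_mul, mul_comm, zpow_mul, zpow_natCast,
      hζ.pow_eq_one, one_zpow, sub_self, zero_div]

theorem hasSum_comp_mul [CharZero K] [TopologicalSpace K] [IsTopologicalRing K]
    (hζ : IsPrimitiveRoot ζ k) (hk : k ≠ 0) {a : ℤ → K} {F : K → K}
    (h : ∀ j < k, HasSum (fun n : ℤ => a n * (ζ ^ j) ^ n) (F (ζ ^ j))) :
    HasSum (fun ν : ℤ => a (k * ν)) ((∑ j ∈ range k, F (ζ ^ j)) / k) := by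
  have hsum := (hasSum_sum fun j hj => h j (mem_range.mp hj)).div_const (k : K)
  simp_rw [← mul_sum, hζ.sum_range_pow_zpow] at hsum
  have hinj : Function.Injective (fun ν : ℤ => (k : ℤ) * ν) :=
    mul_right_injective₀ (by exact_mod_cast hk)
  rw [← hinj.hasSum_iff] at hsum
  · convert hsum using 2 with ν
    simp [hk]
  · intro n hn
    have : ¬ (k : ℤ) ∣ n := fun ⟨ν, hν⟩ => hn ⟨ν, hν.symm⟩
    simp [this]

end IsPrimitiveRoot

noncomputable def primitiveCubeRoot : ℂ := (-1 + I * (√3 : ℝ)) / 2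

theorem primitiveCubeRoot_pow_three : primitiveCubeRoot ^ 3 = 1 := by
  have h3 : ((√3 : ℝ) : ℂ) ^ 2 = 3 := by norm_cast; simp
  rw [primitiveCubeRoot]
  linear_combination ((3 - I * (√3 : ℝ)) / 8) * h3 +
    ((-3 * (√3 : ℝ) ^ 2 + I * (√3 : ℝ) ^ 3) / 8) * I_sq

theorem isPrimitiveRoot_primitiveCubeRoot : IsPrimitiveRoot primitiveCubeRoot 3 := by
  refine isPrimitiveRoot_of_mem_nthRootsFinset Nat.prime_three
    ((Polynomial.mem_nthRootsFinset three_pos _).mpr primitiveCubeRoot_pow_three) fun h => ?_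
  norm_num [primitiveCubeRoot, Complex.ext_iff] at h

theorem primitiveCubeRoot_inv : primitiveCubeRoot⁻¹ = primitiveCubeRoot ^ 2 :=
  inv_eq_of_mul_eq_one_right (by linear_combination primitiveCubeRoot_pow_three)

theorem primitiveCubeRoot_sub_inv : primitiveCubeRoot - primitiveCubeRoot⁻¹ = I * (√3 : ℝ) := by
  have h3 : ((√3 : ℝ) : ℂ) ^ 2 = 3 := by norm_cast; simp
  rw [primitiveCubeRoot_inv, primitiveCubeRoot]
  linear_combination (1 / 4 : ℂ) * h3 - ((√3 : ℝ) ^ 2 / 4 : ℂ) * I_sq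

theorem primitiveCubeRoot_sq_sub_inv :
    primitiveCubeRoot ^ 2 - (primitiveCubeRoot ^ 2)⁻¹ = -(I * (√3 : ℝ)) := by
  rw [← primitiveCubeRoot_inv, inv_inv, ← primitiveCubeRoot_sub_inv, neg_sub]

theorem stmt_5 (x : ℂ) :
    ∑' ν : ℤ, besselJ (3 * ν) x
      = (1 / 3) * (1 + 2 * Complex.cos (x * (Real.sqrt 3 : ℝ) / 2)) := by
  have hω := isPrimitiveRoot_primitiveCubeRoot
  have h := hω.hasSum_comp_mul three_ne_zero (a := fun n => besselJ n x)
    (F := fun t => exp (x / 2 * (t - t⁻¹)))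
    fun j _ => hasSum_besselJ_mul_zpow x _ (pow_ne_zero _ (hω.ne_zero three_ne_zero))
  push_cast at h
  rw [h.tsum_eq]
  simp only [sum_range_succ, sum_range_zero, pow_zero, pow_one, inv_one, sub_self, mul_zero,
    exp_zero, primitiveCubeRoot_sub_inv, primitiveCubeRoot_sq_sub_inv, two_cos]
  ring_nf
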